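/- Let C* be a rank-3 cocircuit of a 3-connected matroid M with r(M) ≥ 4. If there exists x ∈ C* such that x ∈ cl(C* − x), then co(M \ x), the cosimplification of M \ x, is 3-connected. -/

import Mathlib

open Set Matroid

variable {α β : Type*}

namespace NDP

/-- The rank of a set `X` in a matroid `M`: the largest cardinality of an
independent subset of `X` (intended for finite matroids). -/
noncomputable def rk (M : Matroid α) (X : Set α) : ℕ :=
  sSup {n : ℕ | ∃ I, M.Indep I ∧ I ⊆ X ∧ I.ncard = n}

/-- The connectivity function `λ_M(X) = r(X) + r(E − X) − r(M)`, valued in `ℤ`. -/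
noncomputable def lam (M : Matroid α) (X : Set α) : ℤ :=
  (rk M X : ℤ) + (rk M (M.E \ X) : ℤ) - (rk M M.E : ℤ)

/-- Deletion of a set of elements. -/
def delete (M : Matroid α) (D : Set α) : Matroid α := M ↾ (M.E \ D)

/-- Contraction of a set of elements, defined by duality. -/
def contract (M : Matroid α) (C : Set α) : Matroid α := (delete M✶ C)✶

/-- `X` is a `k`-separating set of `M`. -/
def Separating (M : Matroid α) (k : ℕ) (X : Set α) : Prop :=
  X ⊆ M.E ∧ lam M X ≤ (k : ℤ) - 1

/-- `X` is exactly `k`-separating in `M`. -/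
def ExactlySeparating (M : Matroid α) (k : ℕ) (X : Set α) : Prop :=
  X ⊆ M.E ∧ lam M X = (k : ℤ) - 1

/-- `(X, M.E \ X)` is a `k`-separation of `M`. -/
def IsKSeparation (M : Matroid α) (k : ℕ) (X : Set α) : Prop :=
  Separating M k X ∧ k ≤ X.ncard ∧ k ≤ (M.E \ X).ncard

/-- A matroid is connected if it has no 1-separations. -/
def Connected (M : Matroid α) : Prop := ∀ X, ¬ IsKSeparation M 1 X

/-- A matroid is 3-connected if it has no k-separations for k < 3. -/
def ThreeConnected (M : Matroid α) : Prop := ∀ k < 3, ∀ X, ¬ IsKSeparation M k X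

/-- A circuit: a minimal dependent set. -/
def Circuit (M : Matroid α) (C : Set α) : Prop :=
  C ⊆ M.E ∧ ¬ M.Indep C ∧ ∀ D, D ⊂ C → M.Indep D

def Cocircuit (M : Matroid α) (C : Set α) : Prop := Circuit M✶ C

def Triangle (M : Matroid α) (T : Set α) : Prop := Circuit M T ∧ T.ncard = 3

def Triad (M : Matroid α) (T : Set α) : Prop := Cocircuit M T ∧ T.ncard = 3

/-- `N` is a minor of `M`. -/
def Minor (N M : Matroid α) : Prop := ∃ C D, N = delete (contract M C) D

/-- `M` has a minor isomorphic to `N`. -/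
def IsoMinor (M : Matroid α) (N : Matroid β) : Prop :=
  ∃ (f : β → α) (hf : Set.InjOn f N.E), Minor (N.map f hf) M

/-- `X` is a set of representatives for the simplification of `M`:
one non-loop element from each parallel class. -/
def SimpRep (M : Matroid α) (X : Set α) : Prop :=
  X ⊆ M.E ∧ (∀ e ∈ X, M.Indep {e}) ∧
  (∀ e ∈ M.E, M.Indep {e} → ∃ f ∈ X, f ∈ M.closure {e}) ∧
  (∀ f ∈ X, ∀ g ∈ X, f ∈ M.closure {g} → f = g)

/-- `si M` (the simplification of `M`) is a 3-connected matroid. -/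
def SiThreeConnected (M : Matroid α) : Prop :=
  ∀ X, SimpRep M X → ThreeConnected (M ↾ X)

/-- `co M` (the cosimplification of `M`) is a 3-connected matroid. -/
def CoThreeConnected (M : Matroid α) : Prop := SiThreeConnected M✶

/-- The restriction of `M` to `P` is isomorphic to the rank-`r` uniform matroid on `P`. -/
def UnifRestr (M : Matroid α) (r : ℕ) (P : Set α) : Prop :=
  P ⊆ M.E ∧ ∀ X ⊆ P, (M.Indep X ↔ X.ncard ≤ r)

/-- A set is fully closed if it is closed in `M` and in `M✶`. -/
def FullClosed (M : Matroid α) (F : Set α) : Prop :=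
  M.closure F = F ∧ M✶.closure F = F

/-- The full closure of `X`: the intersection of all fully closed sets containing `X`. -/
def fcl (M : Matroid α) (X : Set α) : Set α :=
  ⋂₀ {F | X ⊆ F ∧ FullClosed M F}

/-- `(X, {z}, Y)` is a vertical 3-separation of `M`. -/
def VertThreeSep (M : Matroid α) (X : Set α) (z : α) (Y : Set α) : Prop :=
  X ∪ {z} ∪ Y = M.E ∧ Disjoint X Y ∧ z ∉ X ∧ z ∉ Y ∧
  IsKSeparation M 3 (X ∪ {z}) ∧ 3 ≤ rk M (X ∪ {z}) ∧ 3 ≤ rk M Y ∧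
  IsKSeparation M 3 X ∧ 3 ≤ rk M X ∧ 3 ≤ rk M (Y ∪ {z}) ∧
  z ∈ M.closure X ∧ z ∈ M.closure Y

/-- `M` is a wheel or a whirl: its ground set has a cyclic ordering of alternating
spokes and rims in which consecutive triples are alternately triangles and triads. -/
def IsWheelOrWhirl (M : Matroid α) : Prop :=
  ∃ (n : ℕ) (s r : ZMod n → α), 2 ≤ n ∧
    Function.Injective (fun p : ZMod n × Bool => if p.2 then s p.1 else r p.1) ∧
    Set.range s ∪ Set.range r = M.E ∧
    ∀ i : ZMod n, Triangle M {s i, r i, s (i + 1)} ∧ Triad M {r i, s (i + 1), r (i + 1)}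

/-- `f` (restricted to `{0, …, k−1}`) is a fan ordering of length `k` in `M`. -/
def IsFanOrd (M : Matroid α) (k : ℕ) (f : ℕ → α) : Prop :=
  3 ≤ k ∧ Set.InjOn f (Set.Iio k) ∧ (∀ i < k, f i ∈ M.E) ∧
  (Triangle M {f 0, f 1, f 2} ∨ Triad M {f 0, f 1, f 2}) ∧
  ∀ i, i + 3 < k →
    (Triangle M {f i, f (i+1), f (i+2)} → Triad M {f (i+1), f (i+2), f (i+3)}) ∧
    (Triad M {f i, f (i+1), f (i+2)} → Triangle M {f (i+1), f (i+2), f (i+3)})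

/-- `F` is a fan of `M`. -/
def IsFan (M : Matroid α) (F : Set α) : Prop :=
  ∃ k f, IsFanOrd M k f ∧ F = f '' Set.Iio k

/-- `F` is a maximal fan of `M`. -/
def IsMaximalFan (M : Matroid α) (F : Set α) : Prop :=
  IsFan M F ∧ ∀ F', IsFan M F' → F ⊆ F' → F' = F

end NDP

/-!
Let `X` represent the simplification of `(M \ x)*` and let `(Y, X - Y)` be a `k`-separation of
its restriction to `X`, with `k ≤ 2`. Replacing every element of `Y` by its parallel class in
`(M \ x)*` gives a partition `(A, B)` of `E - x` with `λ_{M \ x}(A) = λ_{(M \ x)*}(A) ≤ k - 1`.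
Since `M` is 3-connected, `M \ x` is connected, which rules out `k ≤ 1`.

For `k = 2`, 3-connectivity of `M` forces `r(A) + r(B) = r(M) + 1` and `x ∉ cl(A) ∪ cl(B)`; as
`A` and `B` have corank at least 2 in `M \ x`, both are dependent, so `|A|, |B| ≥ 3`. Because
`x ∈ cl(C* - x)`, each of `A ∩ C*`, `B ∩ C*` has rank at most 2, and their ranks add up to at
least `r(C*) = 3`. If `r(B ∩ C*) = 2`, submodularity gives `r(B ∪ C*) ≤ r(B) + 1`, and
3-connectivity applied to `(B ∪ C*, A - C*)` yields `A ⊆ cl(A - C*)`; this puts the nonempty set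
`A ∩ C*` inside the hyperplane `E - C*`, unless `|A - C*| ≤ 1`. Counting with `|E - C*| ≥ 3` and
the simplicity of `M` rules out the remaining cases.
-/

namespace NDP

variable {M : Matroid α} {A B C D I S X Y : Set α} {e x : α}

section Rank

lemma rk_restrict (M : Matroid α) {R : Set α} (hXR : X ⊆ R) : rk (M ↾ R) X = rk M X := by
  unfold rk
  congr 1
  ext n
  constructor
  · rintro ⟨I, hI, hIX, rfl⟩
    exact ⟨I, (restrict_indep_iff.mp hI).1, hIX, rfl⟩
  · rintro ⟨I, hI, hIX, rfl⟩
    exact ⟨I, restrict_indep_iff.mpr ⟨hI, hIX.trans hXR⟩, hIX, rfl⟩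

lemma rk_delete (M : Matroid α) (hXD : X ⊆ M.E \ D) : rk (delete M D) X = rk M X :=
  rk_restrict M hXD

variable [M.RankFinite]

lemma cast_rk (M : Matroid α) [M.RankFinite] (X : Set α) : (rk M X : ℕ∞) = M.eRk X := by
  obtain ⟨I, hI⟩ := M.exists_isBasis' X
  have hle : ∀ J, M.Indep J → J ⊆ X → J.ncard ≤ I.ncard := fun J hJ hJX => by
    have h := (hJ.encard_le_eRk_of_subset hJX).trans_eq hI.encard_eq_eRk.symm
    rwa [← hJ.finite.cast_ncard_eq, ← hI.indep.finite.cast_ncard_eq, Nat.cast_le] at h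
  rw [← hI.encard_eq_eRk, ← hI.indep.finite.cast_ncard_eq, Nat.cast_inj]
  refine le_antisymm (csSup_le ⟨0, ∅, M.empty_indep, empty_subset X, ncard_empty α⟩ ?_)
    (le_csSup ⟨I.ncard, ?_⟩ ⟨I, hI.indep, hI.subset, rfl⟩)
  all_goals rintro n ⟨J, hJ, hJX, rfl⟩; exact hle J hJ hJX

lemma rk_mono (h : X ⊆ Y) : rk M X ≤ rk M Y := by
  simpa only [← cast_rk, Nat.cast_le] using M.eRk_mono h

lemma rk_le_ncard (hX : X.Finite) : rk M X ≤ X.ncard := by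
  simpa only [← cast_rk, ← hX.cast_ncard_eq, Nat.cast_le] using M.eRk_le_encard X

lemma ncard_le_rk (hI : M.Indep I) (hIX : I ⊆ X) : I.ncard ≤ rk M X := by
  simpa only [← cast_rk, ← hI.finite.cast_ncard_eq, Nat.cast_le] using
    hI.encard_le_eRk_of_subset hIX

lemma rk_empty : rk M ∅ = 0 := by
  simpa only [ncard_empty, nonpos_iff_eq_zero] using rk_le_ncard (M := M) finite_empty

lemma nonempty_of_one_le_rk (h : 1 ≤ rk M X) : X.Nonempty := by
  rw [nonempty_iff_ne_empty]
  rintro rfl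
  rw [rk_empty] at h
  omega

lemma rk_inter_add_rk_union_le (X Y : Set α) :
    rk M (X ∩ Y) + rk M (X ∪ Y) ≤ rk M X + rk M Y := by
  simpa only [← cast_rk, ← Nat.cast_add, Nat.cast_le] using M.eRk_inter_add_eRk_union_le X Y

lemma rk_union_le (X Y : Set α) : rk M (X ∪ Y) ≤ rk M X + rk M Y := by
  simpa only [← cast_rk, ← Nat.cast_add, Nat.cast_le] using M.eRk_union_le_eRk_add_eRk X Y

lemma rk_insert_le (e : α) (X : Set α) : rk M (insert e X) ≤ rk M X + 1 := by
  simpa only [← cast_rk, ← Nat.cast_add_one, Nat.cast_le] using M.eRk_insert_le_add_one e X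

lemma rk_closure_eq (X : Set α) : rk M (M.closure X) = rk M X := by
  simpa only [← cast_rk, Nat.cast_inj] using M.eRk_closure_eq X

lemma rk_eq_of_subset_closure (hXY : X ⊆ Y) (hY : Y ⊆ M.closure X) : rk M Y = rk M X :=
  le_antisymm ((rk_mono hY).trans (rk_closure_eq X).le) (rk_mono hXY)

lemma rk_insert_of_mem_closure (he : e ∈ M.closure X) (hX : X ⊆ M.E) :
    rk M (insert e X) = rk M X :=
  rk_eq_of_subset_closure (subset_insert e X) (insert_subset he (M.subset_closure X hX))

lemma closure_eq_closure_of_rk_le (hXY : X ⊆ Y) (h : rk M Y ≤ rk M X) :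
    M.closure X = M.closure Y :=
  (M.isRkFinite_set X).closure_eq_closure_of_subset_of_eRk_ge_eRk hXY
    (by simpa only [← cast_rk, Nat.cast_le] using h)

lemma rk_lt_of_mem_closure (hSY : S ⊆ Y) (hY : x ∈ M.closure Y) (hS : x ∉ M.closure S) :
    rk M S < rk M Y := by
  by_contra! h
  exact hS (closure_eq_closure_of_rk_le hSY h ▸ hY)

lemma rk_sdiff_singleton_of_mem_closure (hx : x ∈ M.closure (X \ {x})) (hX : X ⊆ M.E) :
    rk M (X \ {x}) = rk M X := by
  refine (rk_eq_of_subset_closure sdiff_subset fun e he => ?_).symm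
  by_cases hex : e = x
  · exact hex ▸ hx
  · exact M.subset_closure _ (sdiff_subset.trans hX) ⟨he, hex⟩

lemma rk_inter_lt_of_notMem_closure (hx : x ∈ M.closure (C \ {x})) (hC : C ⊆ M.E)
    (hxA : x ∉ M.closure A) : rk M (A ∩ C) < rk M C := by
  have hxA' : x ∉ A := fun h => hxA (M.mem_closure_of_mem' h (M.closure_subset_ground _ hx))
  rw [← rk_sdiff_singleton_of_mem_closure hx hC]
  refine rk_lt_of_mem_closure (fun e he => ⟨he.2, ?_⟩) hx
    fun h => hxA (M.closure_subset_closure inter_subset_left h)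
  rintro rfl
  exact hxA' he.1

end Rank

lemma rk_dual_add_rk_ground [M.Finite] (hX : X ⊆ M.E) :
    rk M✶ X + rk M M.E = rk M (M.E \ X) + X.ncard := by
  have h := M.eRk_dual_add_eRank X hX
  rwa [← eRk_ground, ← cast_rk, ← cast_rk, ← cast_rk, ← (M.ground_finite.subset hX).cast_ncard_eq,
    ← Nat.cast_add, ← Nat.cast_add, Nat.cast_inj] at h

instance delete_finite (M : Matroid α) [M.Finite] (D : Set α) : (delete M D).Finite :=
  ⟨M.ground_finite.subset sdiff_subset⟩

section Connectivity

lemma lam_nonneg (M : Matroid α) [M.RankFinite] (X : Set α) : 0 ≤ lam M X := by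
  have h := (rk_mono (M := M) (show M.E ⊆ X ∪ (M.E \ X) from fun e he => by
    by_cases heX : e ∈ X
    exacts [Or.inl heX, Or.inr ⟨he, heX⟩])).trans (rk_union_le X (M.E \ X))
  unfold lam
  omega

lemma lam_compl (M : Matroid α) (hX : X ⊆ M.E) : lam M (M.E \ X) = lam M X := by
  unfold lam
  rw [sdiff_sdiff_cancel_left hX]
  ring

lemma lam_dual (M : Matroid α) [M.Finite] (hX : X ⊆ M.E) : lam M✶ X = lam M X := by
  have hX' := rk_dual_add_rk_ground hX
  have hXc := rk_dual_add_rk_ground (M := M) (X := M.E \ X) sdiff_subset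
  have hE := rk_dual_add_rk_ground (M := M) subset_rfl
  have hcard := ncard_sdiff_add_ncard_of_subset hX M.ground_finite
  rw [sdiff_sdiff_cancel_left hX] at hXc
  rw [sdiff_self, rk_empty] at hE
  unfold lam
  rw [dual_ground]
  omega

lemma ncard_ground_sdiff_eq_add_one [M.Finite] (hx : x ∈ M.E) (hA : A ⊆ M.E \ {x}) :
    (M.E \ A).ncard = ((M.E \ {x}) \ A).ncard + 1 := by
  have hEA : M.E \ A = insert x ((M.E \ {x}) \ A) := by
    ext e
    have := @hA e
    by_cases hex : e = x
    · subst hex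
      simp_all
    · simp_all
  rw [hEA, ncard_insert_of_notMem (by simp) M.ground_finite.sdiff.sdiff]

variable [M.RankFinite]

lemma lam_le_lam_delete_add (hA : A ⊆ M.E \ {x}) :
    lam M A ≤ lam (delete M {x}) A +
      ((rk M (insert x ((M.E \ {x}) \ A)) : ℤ) - rk M ((M.E \ {x}) \ A)) := by
  have hcompl : M.E \ A ⊆ insert x ((M.E \ {x}) \ A) := fun e he => by
    by_cases hex : e = x
    exacts [Or.inl hex, Or.inr ⟨⟨he.1, hex⟩, he.2⟩]
  have h1 := rk_mono (M := M) hcompl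
  have h2 : rk M (M.E \ {x}) ≤ rk M M.E := rk_mono sdiff_subset
  unfold lam
  rw [show (delete M {x}).E = M.E \ {x} from rfl, rk_delete M hA, rk_delete M sdiff_subset,
    rk_delete M subset_rfl]
  omega

lemma lam_le_lam_delete_add_one (hA : A ⊆ M.E \ {x}) :
    lam M A ≤ lam (delete M {x}) A + 1 := by
  have h := lam_le_lam_delete_add hA
  have := rk_insert_le (M := M) x ((M.E \ {x}) \ A)
  omega

lemma lam_le_lam_delete_of_mem_closure (hA : A ⊆ M.E \ {x})
    (hx : x ∈ M.closure ((M.E \ {x}) \ A)) : lam M A ≤ lam (delete M {x}) A := by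
  have h := lam_le_lam_delete_add hA
  rwa [rk_insert_of_mem_closure hx (sdiff_subset.trans sdiff_subset), sub_self, add_zero] at h

lemma lam_delete_eq (hx : x ∈ M.closure (M.E \ {x})) (hA : A ⊆ M.E \ {x}) :
    lam (delete M {x}) A = rk M A + rk M ((M.E \ {x}) \ A) - rk M M.E := by
  unfold lam
  rw [show (delete M {x}).E = M.E \ {x} from rfl, rk_delete M hA, rk_delete M sdiff_subset,
    rk_delete M subset_rfl, rk_sdiff_singleton_of_mem_closure hx subset_rfl]

lemma rk_dual_delete_add_rk_ground [M.Finite] (hx : x ∈ M.closure (M.E \ {x}))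
    (hA : A ⊆ M.E \ {x}) :
    rk (delete M {x})✶ A + rk M M.E = rk M ((M.E \ {x}) \ A) + A.ncard := by
  have h := rk_dual_add_rk_ground hA (M := delete M {x})
  rwa [show (delete M {x}).E = M.E \ {x} from rfl, rk_delete M sdiff_subset,
    rk_delete M subset_rfl, rk_sdiff_singleton_of_mem_closure hx subset_rfl] at h

end Connectivity

section Cocircuit

lemma Cocircuit.closure_insert_compl (hC : Cocircuit M C) (he : e ∈ C) :
    M.closure (insert e (M.E \ C)) = M.E := by
  have hcoindep : M.Coindep (C \ {e}) := hC.2.2 _ (sdiff_singleton_ssubset.mpr he)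
  convert hcoindep.closure_compl using 2
  ext f
  have := @hC.1 f
  by_cases hfe : f = e
  · subst hfe
    simp_all
  · simp_all

lemma Cocircuit.notMem_closure_compl (hC : Cocircuit M C) (he : e ∈ C) :
    e ∉ M.closure (M.E \ C) := fun hcl => hC.2.1 <|
  (coindep_iff_closure_compl_eq_ground (M := M) hC.1).mpr <|
    (closure_insert_eq_of_mem_closure hcl).symm.trans (hC.closure_insert_compl he)

lemma Cocircuit.rk_ground_le_rk_compl_add_one [M.RankFinite] (hC : Cocircuit M C)
    (he : e ∈ C) : rk M M.E ≤ rk M (M.E \ C) + 1 := by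
  have h := rk_closure_eq (M := M) (insert e (M.E \ C))
  rw [hC.closure_insert_compl he] at h
  exact h.trans_le (rk_insert_le e _)

end Cocircuit

section Simplification

def parallelHull (M : Matroid α) (Y : Set α) : Set α := {e | ∃ y ∈ Y, e ∈ M.closure {y}}

lemma parallelHull_subset_ground : parallelHull M Y ⊆ M.E := by
  rintro e ⟨y, -, he⟩
  exact M.closure_subset_ground _ he

lemma subset_parallelHull (hY : Y ⊆ M.E) : Y ⊆ parallelHull M Y :=
  fun y hy => ⟨y, hy, M.mem_closure_self y (hY hy)⟩

lemma parallelHull_subset_closure : parallelHull M Y ⊆ M.closure Y := by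
  rintro e ⟨y, hy, he⟩
  exact M.closure_subset_closure (singleton_subset_iff.mpr hy) he

lemma SimpRep.sdiff_subset_compl_parallelHull (hX : SimpRep M X) (hYX : Y ⊆ X) :
    X \ Y ⊆ M.E \ parallelHull M Y := by
  rintro z ⟨hzX, hzY⟩
  refine ⟨hX.1 hzX, ?_⟩
  rintro ⟨y, hy, hzy⟩
  exact hzY (hX.2.2.2 z hzX y (hYX hy) hzy ▸ hy)

lemma SimpRep.compl_parallelHull_subset_closure (hX : SimpRep M X) :
    M.E \ parallelHull M Y ⊆ M.closure (X \ Y) := by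
  rintro e ⟨heE, heY⟩
  by_cases he : M.IsNonloop e
  · obtain ⟨f, hfX, hfe⟩ := hX.2.2.1 e heE (indep_singleton.mpr he)
    have hf : M.IsNonloop f := indep_singleton.mp (hX.2.1 f hfX)
    have hef : e ∈ M.closure {f} := (he.mem_closure_comm hf).mp hfe
    have hfY : f ∉ Y := fun hfY => heY ⟨f, hfY, hef⟩
    exact M.closure_subset_closure (singleton_subset_iff.mpr (show f ∈ X \ Y from ⟨hfX, hfY⟩)) hef
  · exact ((not_isNonloop_iff heE).mp he).mem_closure _

lemma SimpRep.two_le_rk [M.Finite] (hX : SimpRep M X) (hYX : Y ⊆ X) (hY : 2 ≤ Y.ncard)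
    (hYS : Y ⊆ S) : 2 ≤ rk M S := by
  obtain ⟨u, v, hu, hv, huv⟩ :=
    (one_lt_ncard_iff (M.ground_finite.subset (hYX.trans hX.1))).mp hY
  have hindep : M.Indep {u, v} :=
    ((hX.2.1 v (hYX hv)).insert_indep_iff_of_notMem (by simpa using huv)).mpr
      ⟨hX.1 (hYX hu), fun hcl => huv (hX.2.2.2 u (hYX hu) v (hYX hv) hcl)⟩
  rw [← ncard_pair huv]
  exact ncard_le_rk hindep (insert_subset (hYS hu) (singleton_subset_iff.mpr (hYS hv)))

lemma lam_restrict_eq_of_subset_closure [M.RankFinite] (hX : X ⊆ M.E) (hYX : Y ⊆ X)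
    (hYA : Y ⊆ A) (hA : A ⊆ M.closure Y) (hXA : X \ Y ⊆ M.E \ A)
    (hAc : M.E \ A ⊆ M.closure (X \ Y)) : lam (M ↾ X) Y = lam M A := by
  have hEX : M.E ⊆ M.closure X := fun e he => by
    by_cases heA : e ∈ A
    · exact M.closure_subset_closure hYX (hA heA)
    · exact M.closure_subset_closure sdiff_subset (hAc ⟨he, heA⟩)
  unfold lam
  rw [restrict_ground_eq, rk_restrict M hYX, rk_restrict M sdiff_subset, rk_restrict M subset_rfl,
    rk_eq_of_subset_closure hYA hA, rk_eq_of_subset_closure hXA hAc,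
    rk_eq_of_subset_closure hX hEX]

lemma SimpRep.lam_restrict_eq [M.RankFinite] (hX : SimpRep M X) (hYX : Y ⊆ X) :
    lam (M ↾ X) Y = lam M (parallelHull M Y) :=
  lam_restrict_eq_of_subset_closure hX.1 hYX (subset_parallelHull (hYX.trans hX.1))
    parallelHull_subset_closure (hX.sdiff_subset_compl_parallelHull hYX)
    hX.compl_parallelHull_subset_closure

end Simplification

section ThreeConnected

lemma ThreeConnected.le_lam (hM : ThreeConnected M) {k : ℕ} (hk : k < 3) (hX : X ⊆ M.E)
    (hkX : k ≤ X.ncard) (hkX' : k ≤ (M.E \ X).ncard) : (k : ℤ) ≤ lam M X := by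
  by_contra! h
  exact hM k hk X ⟨⟨hX, by omega⟩, hkX, hkX'⟩

variable [M.Finite]

lemma ThreeConnected.two_le_rk (hM : ThreeConnected M) (hE : 4 ≤ M.E.ncard)
    (hX : X ⊆ M.E) (hX2 : 2 ≤ X.ncard) : 2 ≤ rk M X := by
  obtain ⟨u, v, hu, hv, huv⟩ := (one_lt_ncard_iff (M.ground_finite.subset hX)).mp hX2
  have huvE : {u, v} ⊆ M.E := insert_subset (hX hu) (singleton_subset_iff.mpr (hX hv))
  have hcard := ncard_sdiff_add_ncard_of_subset huvE M.ground_finite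
  rw [ncard_pair huv] at hcard
  have hsep := hM.le_lam (k := 2) (by norm_num) huvE (ncard_pair huv).ge (by omega)
  have hrE : rk M (M.E \ {u, v}) ≤ rk M M.E := rk_mono sdiff_subset
  have hmono : rk M {u, v} ≤ rk M X := rk_mono (insert_subset hu (singleton_subset_iff.mpr hv))
  unfold lam at hsep
  omega

lemma ThreeConnected.two_le_lam_of_subset_sdiff_singleton (hM : ThreeConnected M)
    (hx : x ∈ M.E) (hA : A ⊆ M.E \ {x}) (hA2 : 2 ≤ A.ncard)
    (hB1 : 1 ≤ ((M.E \ {x}) \ A).ncard) : 2 ≤ lam M A := by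
  have hsep := hM.le_lam (k := 2) (by norm_num) (hA.trans sdiff_subset) hA2
    (by rw [ncard_ground_sdiff_eq_add_one hx hA]; omega)
  push_cast at hsep
  exact hsep

lemma ThreeConnected.notMem_closure_of_lam_delete_lt_two (hM : ThreeConnected M)
    (hx : x ∈ M.E) (hA : A ⊆ M.E \ {x}) (hA2 : 2 ≤ A.ncard)
    (hB1 : 1 ≤ ((M.E \ {x}) \ A).ncard) (hlam : lam (delete M {x}) A < 2) :
    x ∉ M.closure ((M.E \ {x}) \ A) := fun h => by
  have := hM.two_le_lam_of_subset_sdiff_singleton hx hA hA2 hB1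
  have := lam_le_lam_delete_of_mem_closure hA h
  omega

lemma ThreeConnected.one_le_lam_delete (hM : ThreeConnected M) (hE : 4 ≤ M.E.ncard)
    (hx : x ∈ M.E) (hA : A ⊆ M.E \ {x}) (hA1 : 1 ≤ A.ncard)
    (hB1 : 1 ≤ ((M.E \ {x}) \ A).ncard) : 1 ≤ lam (delete M {x}) A := by
  have key : ∀ S ⊆ M.E \ {x}, 2 ≤ S.ncard → 1 ≤ ((M.E \ {x}) \ S).ncard →
      1 ≤ lam (delete M {x}) S := fun S hS hS2 hS1 => by
    have := hM.two_le_lam_of_subset_sdiff_singleton hx hS hS2 hS1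
    have := lam_le_lam_delete_add_one hS
    omega
  have hcard := ncard_sdiff_add_ncard_of_subset hA (M.ground_finite.sdiff (t := {x}))
  have hEx := ncard_sdiff_add_ncard_of_subset (singleton_subset_iff.mpr hx) M.ground_finite
  rw [ncard_singleton] at hEx
  by_cases hA2 : 2 ≤ A.ncard
  · exact key A hA hA2 hB1
  · have h := key ((M.E \ {x}) \ A) sdiff_subset (by omega)
      (by rw [sdiff_sdiff_cancel_left hA]; exact hA1)
    rwa [← lam_compl (delete M {x}) hA]

lemma ThreeConnected.ncard_sdiff_le_one (hM : ThreeConnected M) (hC : Cocircuit M C)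
    (hxC : x ∈ C) (hC2 : 2 ≤ C.ncard) (hAB : A ∪ B = M.E \ {x}) (hdisj : Disjoint A B)
    (hrk : rk M A + rk M B ≤ rk M M.E + 1) (hBC : rk M (B ∩ C) + 1 = rk M C)
    (hAC : (A ∩ C).Nonempty) : (A \ C).ncard ≤ 1 := by
  by_contra! h
  have hCE : C ⊆ M.E := hC.1
  have hAE : A ⊆ M.E := subset_union_left.trans (hAB.symm ▸ sdiff_subset)
  have hBE : B ⊆ M.E := subset_union_right.trans (hAB.symm ▸ sdiff_subset)
  have hcompl : M.E \ (B ∪ C) = A \ C := by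
    ext e
    have := congrArg (e ∈ ·) hAB
    have := hdisj.notMem_of_mem_left (a := e)
    simp at *
    grind
  have hsep := hM.le_lam (k := 2) (by norm_num) (union_subset hBE hCE)
    (hC2.trans (ncard_le_ncard subset_union_right (M.ground_finite.subset (union_subset hBE hCE))))
    (by rw [hcompl]; omega)
  rw [lam, hcompl] at hsep
  have hsub := rk_inter_add_rk_union_le (M := M) B C
  have hA : rk M A ≤ rk M (A \ C) := by push_cast at hsep; omega
  obtain ⟨e, heA, heC⟩ := hAC
  have hspan : A ⊆ M.closure (A \ C) := by
    rw [closure_eq_closure_of_rk_le sdiff_subset hA]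
    exact M.subset_closure A hAE
  exact hC.notMem_closure_compl heC
    (M.closure_subset_closure (sdiff_subset_sdiff_left hAE) (hspan heA))

lemma ThreeConnected.rk_ground_add_one_lt (hM : ThreeConnected M) (hr : 4 ≤ rk M M.E)
    (hC : Cocircuit M C) (hrC : rk M C = 3) (hxC : x ∈ C) (hcl : x ∈ M.closure (C \ {x}))
    (hAB : A ∪ B = M.E \ {x}) (hdisj : Disjoint A B) (hxA : x ∉ M.closure A)
    (hxB : x ∉ M.closure B) (hA3 : 3 ≤ A.ncard) (hB3 : 3 ≤ B.ncard) :
    rk M M.E + 1 < rk M A + rk M B := by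
  by_contra! hrk
  have hCE : C ⊆ M.E := hC.1
  have hAE : A ⊆ M.E := subset_union_left.trans (hAB.symm ▸ sdiff_subset)
  have hBE : B ⊆ M.E := subset_union_right.trans (hAB.symm ▸ sdiff_subset)
  have hE : 4 ≤ M.E.ncard := hr.trans (rk_le_ncard M.ground_finite)
  have hC3 : 3 ≤ C.ncard := hrC ▸ rk_le_ncard (M.ground_finite.subset hCE)
  have hAC := rk_inter_lt_of_notMem_closure hcl hCE hxA
  have hBC := rk_inter_lt_of_notMem_closure hcl hCE hxB
  have hABC : rk M C ≤ rk M (A ∩ C) + rk M (B ∩ C) := by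
    have hCx : C \ {x} = (A ∩ C) ∪ (B ∩ C) := by
      rw [← union_inter_distrib_right, hAB, sdiff_inter_right_comm, inter_eq_right.mpr hCE]
    rw [← rk_sdiff_singleton_of_mem_closure hcl hCE, hCx]
    exact rk_union_le _ _
  have hEC : 3 ≤ (M.E \ C).ncard :=
    le_trans (by have := hC.rk_ground_le_rk_compl_add_one hxC; omega)
      (rk_le_ncard (M := M) M.ground_finite.sdiff)
  have hsplit : (M.E \ C).ncard = (A \ C).ncard + (B \ C).ncard := by
    rw [← ncard_union_eq (hdisj.mono sdiff_subset sdiff_subset)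
      (M.ground_finite.subset hAE).sdiff (M.ground_finite.subset hBE).sdiff,
      ← union_sdiff_distrib, hAB, Set.sdiff_sdiff, singleton_union, insert_eq_of_mem hxC]
  have hA := ncard_inter_add_ncard_sdiff_eq_ncard A C (M.ground_finite.subset hAE)
  have hB := ncard_inter_add_ncard_sdiff_eq_ncard B C (M.ground_finite.subset hBE)
  have hsmallA : 2 ≤ (A ∩ C).ncard → 2 ≤ rk M (A ∩ C) :=
    hM.two_le_rk hE (inter_subset_left.trans hAE)
  have hsmallB : 2 ≤ (B ∩ C).ncard → 2 ≤ rk M (B ∩ C) :=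
    hM.two_le_rk hE (inter_subset_left.trans hBE)
  have hcoreA : rk M (B ∩ C) = 2 → (A \ C).ncard ≤ 1 := fun h =>
    hM.ncard_sdiff_le_one hC hxC (by omega) hAB hdisj hrk (by omega)
      (nonempty_of_one_le_rk (M := M) (by omega))
  have hcoreB : rk M (A ∩ C) = 2 → (B \ C).ncard ≤ 1 := fun h =>
    hM.ncard_sdiff_le_one hC hxC (by omega) (union_comm A B ▸ hAB) hdisj.symm (by omega)
      (by omega) (nonempty_of_one_le_rk (M := M) (by omega))
  -- Both intersections with `C` have rank 1 or 2. If both have rank 2, then `|E - C| ≤ 2`;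
  -- if one has rank 1, that side has at most one element in `C` and at most one outside.
  omega

lemma ThreeConnected.two_le_lam_delete (hM : ThreeConnected M) (hr : 4 ≤ rk M M.E)
    (hC : Cocircuit M C) (hrC : rk M C = 3) (hxC : x ∈ C) (hcl : x ∈ M.closure (C \ {x}))
    (hA : A ⊆ M.E \ {x}) (hA2 : 2 ≤ rk (delete M {x})✶ A)
    (hB2 : 2 ≤ rk (delete M {x})✶ ((M.E \ {x}) \ A)) : 2 ≤ lam (delete M {x}) A := by
  by_contra! hlam
  set B := (M.E \ {x}) \ A
  have hCE : C ⊆ M.E := hC.1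
  have hxE : x ∈ M.E := hCE hxC
  have hx : x ∈ M.closure (M.E \ {x}) :=
    M.closure_subset_closure (sdiff_subset_sdiff_left hCE) hcl
  have hB : B ⊆ M.E \ {x} := sdiff_subset
  have hBA : (M.E \ {x}) \ B = A := sdiff_sdiff_cancel_left hA
  have hE : 4 ≤ M.E.ncard := hr.trans (rk_le_ncard M.ground_finite)
  have hA2' : 2 ≤ A.ncard :=
    hA2.trans (rk_le_ncard (M.ground_finite.subset (hA.trans sdiff_subset)))
  have hB2' : 2 ≤ B.ncard := hB2.trans (rk_le_ncard M.ground_finite.sdiff.sdiff)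
  have hxB : x ∉ M.closure B :=
    hM.notMem_closure_of_lam_delete_lt_two hxE hA hA2' (one_le_two.trans hB2') hlam
  have hxA : x ∉ M.closure A := by
    have h := hM.notMem_closure_of_lam_delete_lt_two hxE hB hB2' (by rw [hBA]; omega)
      ((lam_compl (delete M {x}) hA).trans_lt hlam)
    rwa [hBA] at h
  have hlamM : lam (delete M {x}) A = rk M A + rk M B - rk M M.E := lam_delete_eq hx hA
  have hdualA : rk (delete M {x})✶ A + rk M M.E = rk M B + A.ncard :=
    rk_dual_delete_add_rk_ground hx hA
  have hdualB : rk (delete M {x})✶ B + rk M M.E = rk M A + B.ncard := by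
    rw [rk_dual_delete_add_rk_ground hx hB, hBA]
  have hrkA := hM.two_le_rk hE (hA.trans sdiff_subset) hA2'
  have hrkB := hM.two_le_rk hE (hB.trans sdiff_subset) hB2'
  -- `|A| = r*(A) + r(M) - r(B) ≥ 2 + r(A) - 1 ≥ 3`, and symmetrically for `B`.
  have : rk M M.E + 1 < rk M A + rk M B := hM.rk_ground_add_one_lt hr hC hrC hxC hcl
    (union_sdiff_cancel hA) disjoint_sdiff_right hxA hxB (by omega) (by omega)
  omega

end ThreeConnected

end NDP

/-- If `C*` is a rank-3 cocircuit of a 3-connected matroid `M` with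
`r(M) ≥ 4` and `x ∈ C*` satisfies `x ∈ cl(C* − x)`, then `co(M \ x)` is 3-connected. -/
theorem stmt11 (M : Matroid α) [M.Finite] (hM : NDP.ThreeConnected M)
    (hr : 4 ≤ NDP.rk M M.E) (C : Set α) (hC : NDP.Cocircuit M C)
    (hrC : NDP.rk M C = 3) (x : α) (hx : x ∈ C)
    (hcl : x ∈ M.closure (C \ {x})) :
    NDP.CoThreeConnected (NDP.delete M {x}) := by
  intro X hX k hk Y ⟨⟨hYX, hlam⟩, hkY, hkXY⟩
  have hAE : NDP.parallelHull (NDP.delete M {x})✶ Y ⊆ M.E \ {x} := NDP.parallelHull_subset_ground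
  have hYA := NDP.subset_parallelHull (hYX.trans hX.1)
  have hXYB := hX.sdiff_subset_compl_parallelHull hYX
  rw [hX.lam_restrict_eq hYX, NDP.lam_dual _ hAE] at hlam
  generalize NDP.parallelHull (NDP.delete M {x})✶ Y = A at hAE hYA hXYB hlam
  have hkA : k ≤ A.ncard :=
    hkY.trans (ncard_le_ncard hYA (M.ground_finite.subset (hAE.trans sdiff_subset)))
  have hkB : k ≤ ((M.E \ {x}) \ A).ncard :=
    hkXY.trans (ncard_le_ncard hXYB M.ground_finite.sdiff.sdiff)
  interval_cases k
  · have := NDP.lam_nonneg (NDP.delete M {x}) A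
    omega
  · have := hM.one_le_lam_delete (hr.trans (NDP.rk_le_ncard M.ground_finite)) (hC.1 hx) hAE
      hkA hkB
    omega
  · have := hM.two_le_lam_delete hr hC hrC hx hcl hAE (hX.two_le_rk hYX hkY hYA)
      (hX.two_le_rk sdiff_subset hkXY hXYB)
    omega
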